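/- arXiv:2211.05726 — 3 statements merged into one kernel-verified Lean document; each statement's English description precedes it below -/
import Mathlib

section
/- For any connected cubic graph G, the maximum number of leaves in a spanning tree equals the maximum number of full degree vertices in a spanning tree plus 2; that is, λ(G) = φ(G) + 2. -/
open SimpleGraph

/-- Degree of `v` in `T` (as `Set.ncard` of the neighbor set). -/
noncomputable def deg {V : Type*} (T : SimpleGraph V) (v : V) : ℕ :=
  (T.neighborSet v).ncard

/-- `T` is a spanning tree of `G`. -/
def IsSpanningTree {V : Type*} (G T : SimpleGraph V) : Prop :=
  T ≤ G ∧ T.IsTree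

/-- Number of full degree vertices of the spanning tree `T` of `G`. -/
noncomputable def fullDegCount {V : Type*} (G T : SimpleGraph V) : ℕ :=
  {v : V | deg T v = deg G v}.ncard

/-- Number of leaves of `T`. -/
noncomputable def leafCount {V : Type*} (T : SimpleGraph V) : ℕ :=
  {v : V | deg T v = 1}.ncard

/-- `φ(G)`: maximum number of full degree vertices over all spanning trees. -/
noncomputable def phi {V : Type*} (G : SimpleGraph V) : ℕ :=
  sSup {k | ∃ T : SimpleGraph V, IsSpanningTree G T ∧ fullDegCount G T = k}

/-- `λ(G)`: maximum number of leaves over all spanning trees. -/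
noncomputable def lam {V : Type*} (G : SimpleGraph V) : ℕ :=
  sSup {k | ∃ T : SimpleGraph V, IsSpanningTree G T ∧ leafCount T = k}

/-- `S` is a connected dominating set of `G`. -/
def IsConnDomSet {V : Type*} (G : SimpleGraph V) (S : Set V) : Prop :=
  (G.induce S).Connected ∧ ∀ v : V, v ∈ S ∨ ∃ u ∈ S, G.Adj u v

/-- `γ_C(G)`: minimum size of a connected dominating set. -/
noncomputable def gammaC {V : Type*} (G : SimpleGraph V) : ℕ :=
  sInf {k | ∃ S : Set V, IsConnDomSet G S ∧ S.ncard = k}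

/-- Closed neighborhood of `v` in `G`. -/
def closedNbhd {V : Type*} (G : SimpleGraph V) (v : V) : Set V :=
  insert v (G.neighborSet v)

/-- The square of a graph: join vertices at distance at most 2. -/
def square {V : Type*} (G : SimpleGraph V) : SimpleGraph V where
  Adj u v := u ≠ v ∧ G.Reachable u v ∧ G.dist u v ≤ 2
  symm := by
    constructor
    rintro u v ⟨h1, h2, h3⟩
    exact ⟨h1.symm, h2.symm, by rwa [SimpleGraph.dist_comm]⟩
  loopless := by constructor; rintro v ⟨h, -⟩; exact h rfl

/-!
In a finite tree the degrees sum to `2 (n - 1)`, i.e. `∑ (deg v - 2) = -2`. In a spanning tree of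
a cubic graph every degree is `1`, `2` or `3`, and the full degree vertices are those of degree `3`,
so every spanning tree has exactly two more leaves than full degree vertices. Maximizing over
spanning trees gives `λ(G) = φ(G) + 2`.
-/

open Finset

theorem Nat.sSup_image_add_const {s : Set ℕ} (hne : s.Nonempty) (hbdd : BddAbove s) (n : ℕ) :
    sSup ((· + n) '' s) = sSup s + n :=
  (Monotone.map_csSup_of_continuousAt (continuous_add_const n).continuousAt
    (fun _ _ h => Nat.add_le_add_right h n) hne hbdd).symm

theorem SimpleGraph.IsTree.card_degree_eq_one {V : Type*} [Fintype V] [Nontrivial V]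
    {T : SimpleGraph V} [DecidableRel T.Adj] (hT : T.IsTree) (hmax : ∀ v, T.degree v ≤ 3) :
    #{v | T.degree v = 1} = #{v | T.degree v = 3} + 2 := by
  have hedges := hT.card_edgeFinset
  have hsum := T.sum_degrees_eq_twice_card_edges
  have hpos : ∀ v, 0 < T.degree v := fun v =>
    hT.connected.preconnected.minDegree_pos_of_nontrivial.trans_le (T.minDegree_le_degree v)
  -- summing `deg v - 2 ∈ {-1, 0, 1}` over all vertices gives `-2`
  have hpoint : ∀ v, T.degree v + (if T.degree v = 1 then 1 else 0) =
      2 + (if T.degree v = 3 then 1 else 0) := fun v => by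
    have := hpos v; have := hmax v; split_ifs <;> omega
  have := Finset.sum_congr rfl fun v (_ : v ∈ univ) => hpoint v
  simp only [sum_add_distrib, sum_boole, sum_const, card_univ, smul_eq_mul, Nat.cast_id] at this
  omega

theorem deg_eq_degree {V : Type*} (T : SimpleGraph V) (v : V) [Fintype (T.neighborSet v)] :
    deg T v = T.degree v := by
  rw [deg, Set.ncard_eq_toFinset_card', degree, neighborFinset]

theorem IsSpanningTree.leafCount_eq_fullDegCount_add_two {V : Type*} [Fintype V]
    {G T : SimpleGraph V} (hT : IsSpanningTree G T) (hcubic : ∀ v, deg G v = 3) :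
    leafCount T = fullDegCount G T + 2 := by
  classical
  have hG : ∀ v, G.degree v = 3 := fun v => by rw [← deg_eq_degree, hcubic]
  have : Nontrivial V := by
    obtain ⟨v⟩ := hT.2.connected.nonempty
    obtain ⟨w, hvw⟩ := G.degree_pos_iff_exists_adj v |>.mp (by rw [hG]; norm_num)
    exact ⟨v, w, hvw.ne⟩
  have hmax : ∀ v, T.degree v ≤ 3 := fun v => hG v ▸ degree_le_of_le hT.1
  simp only [leafCount, fullDegCount, deg_eq_degree, hG, Set.ncard_eq_toFinset_card',
    Set.toFinset_ofPred]
  exact hT.2.card_degree_eq_one hmax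

theorem stmt8 {V : Type*} [Fintype V] (G : SimpleGraph V)
    (hG : G.Connected) (hreg : ∀ v : V, deg G v = 3) :
    lam G = phi G + 2 := by
  obtain ⟨T₀, hT₀⟩ := hG.exists_isTree_le
  have hcount := fun T (hT : IsSpanningTree G T) => hT.leafCount_eq_fullDegCount_add_two hreg
  have hleaves : {k | ∃ T, IsSpanningTree G T ∧ leafCount T = k} =
      (· + 2) '' {k | ∃ T, IsSpanningTree G T ∧ fullDegCount G T = k} := by
    ext k
    constructor
    · rintro ⟨T, hT, rfl⟩
      exact ⟨_, ⟨T, hT, rfl⟩, (hcount T hT).symm⟩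
    · rintro ⟨_, ⟨T, hT, rfl⟩, rfl⟩
      exact ⟨T, hT, hcount T hT⟩
  have hne : {k | ∃ T, IsSpanningTree G T ∧ fullDegCount G T = k}.Nonempty :=
    ⟨_, T₀, hT₀, rfl⟩
  have hbdd : BddAbove {k | ∃ T, IsSpanningTree G T ∧ fullDegCount G T = k} :=
    ⟨Nat.card V, by rintro _ ⟨T, -, rfl⟩; exact Set.ncard_le_card _⟩
  rw [lam, phi, hleaves, Nat.sSup_image_add_const hne hbdd]
end

section
/- If v₁,...,v_k are vertices of a connected graph G with pairwise disjoint closed neighborhoods, then G has a spanning tree in which each v_i has full degree. -/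
open SimpleGraph

/-!
The edges of `G` at the centers `v i` form a forest: since the closed neighborhoods are disjoint,
every such edge joins a center to a vertex whose only neighbor among these edges is that center,
so every edge is a bridge. Extending this star forest to a spanning tree of `G` keeps every edge
at every center.
-/

namespace SimpleGraph

variable {V : Type*} {G : SimpleGraph V}

lemma isBridge_of_forall_adj_eq {v w : V} (hvw : v ≠ w) (h : ∀ u, G.Adj w u → u = v) :
    G.IsBridge s(v, w) := by
  refine isBridge_iff.mpr <| not_reachable_of_neighborSet_right_eq_empty hvw ?_
  ext u
  simp only [mem_neighborSet, deleteEdges_adj, Set.mem_singleton_iff, Set.mem_empty_iff_false,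
    iff_false, not_and, not_not]
  intro hwu
  rw [h u hwu, Sym2.eq_swap]

lemma isAcyclic_of_forall_adj_eq
    (h : ∀ v w, G.Adj v w → (∀ u, G.Adj w u → u = v) ∨ ∀ u, G.Adj v u → u = w) :
    G.IsAcyclic := by
  refine isAcyclic_iff_forall_adj_isBridge.mpr fun v w hvw ↦ ?_
  rcases h v w hvw with hw | hv
  · exact isBridge_of_forall_adj_eq hvw.ne hw
  · exact Sym2.eq_swap ▸ isBridge_of_forall_adj_eq hvw.ne.symm hv

lemma mem_closedNbhd_self (v : V) : v ∈ closedNbhd G v := Set.mem_insert v _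

lemma mem_closedNbhd_of_adj {v w : V} (h : G.Adj v w) : w ∈ closedNbhd G v :=
  Set.mem_insert_of_mem v h

def starForest (G : SimpleGraph V) (S : Set V) : SimpleGraph V where
  Adj a b := G.Adj a b ∧ (a ∈ S ∨ b ∈ S)
  symm := ⟨fun _ _ h ↦ ⟨h.1.symm, h.2.symm⟩⟩
  loopless := ⟨fun a h ↦ G.loopless.irrefl a h.1⟩

variable {S : Set V}

@[simp]
lemma starForest_adj {a b : V} : (G.starForest S).Adj a b ↔ G.Adj a b ∧ (a ∈ S ∨ b ∈ S) :=
  Iff.rfl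

lemma starForest_le : G.starForest S ≤ G := fun _ _ h ↦ h.1

lemma neighborSet_starForest_of_mem {a : V} (ha : a ∈ S) :
    (G.starForest S).neighborSet a = G.neighborSet a := by
  ext b
  simp [ha]

lemma starForest_eq_of_adj_of_adj (hS : S.PairwiseDisjoint (closedNbhd G)) {a b u : V}
    (ha : a ∈ S) (hab : G.Adj a b) (hbu : (G.starForest S).Adj b u) : u = a := by
  obtain ⟨hbu, hb | hu⟩ := hbu
  · exact absurd (hS.elim_set hb ha b (mem_closedNbhd_self b) (mem_closedNbhd_of_adj hab))
      hab.ne.symm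
  · exact hS.elim_set hu ha b (mem_closedNbhd_of_adj hbu.symm) (mem_closedNbhd_of_adj hab)

lemma isAcyclic_starForest (hS : S.PairwiseDisjoint (closedNbhd G)) :
    (G.starForest S).IsAcyclic := by
  refine isAcyclic_of_forall_adj_eq ?_
  rintro v w ⟨hvw, hv | hw⟩
  · exact .inl fun _ ↦ starForest_eq_of_adj_of_adj hS hv hvw
  · exact .inr fun _ ↦ starForest_eq_of_adj_of_adj hS hw hvw.symm

end SimpleGraph

theorem stmt15_general {V : Type*} (G : SimpleGraph V) (k : ℕ) (v : Fin k → V)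
    (hG : G.Connected)
    (hdisj : ∀ i j : Fin k, i ≠ j → Disjoint (closedNbhd G (v i)) (closedNbhd G (v j))) :
    ∃ T : SimpleGraph V, IsSpanningTree G T ∧ ∀ i : Fin k, deg T (v i) = deg G (v i) := by
  have hS : (Set.range v).PairwiseDisjoint (closedNbhd G) := by
    rintro _ ⟨i, rfl⟩ _ ⟨j, rfl⟩ hij
    exact hdisj i j (ne_of_apply_ne v hij)
  obtain ⟨T, hHT, hTG, hT⟩ :=
    hG.exists_isTree_le_of_le_of_isAcyclic starForest_le (isAcyclic_starForest hS)
  refine ⟨T, ⟨hTG, hT⟩, fun i ↦ congrArg Set.ncard ?_⟩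
  refine (neighborSet_mono hTG _).antisymm ?_
  rw [← neighborSet_starForest_of_mem (Set.mem_range_self i)]
  exact neighborSet_mono hHT _

theorem stmt15 {V : Type*} [Fintype V] (G : SimpleGraph V) (k : ℕ) (v : Fin k → V)
    (hG : G.Connected)
    (hdisj : ∀ i j : Fin k, i ≠ j → Disjoint (closedNbhd G (v i)) (closedNbhd G (v j))) :
    ∃ T : SimpleGraph V, IsSpanningTree G T ∧ ∀ i : Fin k, deg T (v i) = deg G (v i) :=
  stmt15_general G k v hG hdisj
end

section
/- For a connected cubic graph G on n vertices, the minimum size γ_C(G) of a connected dominating set satisfies γ_C(G) = n - 2 - φ(G), where φ(G) is the maximum number of full degree vertices in a spanning tree. -/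
/-! A spanning tree `T` of a cubic graph has degrees in `{1, 2, 3}`, so the handshake identity
`∑ (deg_T v - 2) = 2 (n - 1) - 2 n = -2` says that `T` has exactly two more leaves than vertices
of full degree. The non-leaves of a spanning tree form a connected dominating set (interior
vertices of tree paths are not leaves, and the neighbour of a leaf is not a leaf once `n ≥ 3`);
conversely a spanning tree of `G[S]`, with each vertex outside a connected dominating set `S`
hung on a neighbour in `S`, has at least `n - |S|` leaves. Hence `γ_C = n - λ = n - (φ + 2)`. -/

open SimpleGraph

lemma Set.ncard_setOf_eq_card_filter {α : Type*} [Fintype α] (p : α → Prop) [DecidablePred p] :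
    {a | p a}.ncard = (Finset.univ.filter p).card := by
  rw [Set.ncard_eq_toFinset_card', Set.toFinset_ofPred]

namespace SimpleGraph

variable {V : Type*} {G T : SimpleGraph V}

lemma deg_eq_degree (T : SimpleGraph V) (v : V) [Fintype (T.neighborSet v)] :
    deg T v = T.degree v := by
  rw [deg, ← card_neighborSet_eq_degree, Set.ncard_eq_toFinset_card', Set.toFinset_card]

lemma deg_mono [Finite V] (h : T ≤ G) (v : V) : deg T v ≤ deg G v :=
  Set.ncard_le_ncard fun _ hw => h hw

lemma Connected.one_le_deg [Finite V] [Nontrivial V] (hT : T.Connected) (v : V) :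
    1 ≤ deg T v := by
  have := Fintype.ofFinite V
  classical
  rw [deg_eq_degree]
  exact hT.preconnected.degree_pos_of_nontrivial v

lemma Walk.IsPath.two_le_deg_of_mem_support [Finite V] {u w x : V} {p : T.Walk u w}
    (hp : p.IsPath) (hx : x ∈ p.support) (hxu : x ≠ u) (hxw : x ≠ w) : 2 ≤ deg T x := by
  obtain ⟨i, rfl, hi⟩ := Walk.mem_support_iff_exists_getVert.mp hx
  have hi0 : i ≠ 0 := by rintro rfl; exact hxu p.getVert_zero
  have hilt : i < p.length := lt_of_le_of_ne hi (by rintro rfl; exact hxw p.getVert_length)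
  rw [← hp.ncard_neighborSet_toSubgraph_internal_eq_two hi0 hilt]
  exact Set.ncard_le_ncard (fun y hy => p.toSubgraph.adj_sub hy)

lemma Connected.two_le_deg_of_adj_of_deg_eq_one [Fintype V] (hT : T.Connected)
    (h3 : 3 ≤ Fintype.card V) {u v : V} (huv : T.Adj u v) (hv : deg T v = 1) :
    2 ≤ deg T u := by
  classical
  obtain ⟨w, -, hw⟩ := Finset.exists_mem_notMem_of_card_lt_card (s := {u, v}) (t := Finset.univ)
    (Finset.card_le_two.trans_lt (by rw [Finset.card_univ]; omega))
  simp only [Finset.mem_insert, Finset.mem_singleton, not_or] at hw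
  let p := (hT v w).some.toPath
  have hnil : ¬ p.1.Nil := Walk.not_nil_of_ne (Ne.symm hw.2)
  have hsnd : p.1.snd = u := by
    obtain ⟨y, hy⟩ := Set.ncard_eq_one.mp hv
    have h1 : p.1.snd ∈ T.neighborSet v := Walk.adj_snd hnil
    have h2 : u ∈ T.neighborSet v := huv.symm
    rw [hy] at h1 h2
    exact h1.trans h2.symm
  refine p.2.two_le_deg_of_mem_support ?_ huv.ne (Ne.symm hw.1)
  exact hsnd ▸ p.1.getVert_mem_support 1

lemma IsSpanningTree.isConnDomSet_nonLeaves [Fintype V] (hT : IsSpanningTree G T)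
    (h3 : 3 ≤ Fintype.card V) : IsConnDomSet G {v | deg T v ≠ 1} := by
  classical
  obtain ⟨hle, hT⟩ := hT
  have hnbr (v : V) (hv : deg T v = 1) : ∃ u, T.Adj u v ∧ deg T u ≠ 1 := by
    obtain ⟨u, hu⟩ := Set.ncard_eq_one.mp hv
    have huv : T.Adj u v := (hu ▸ Set.mem_singleton u : u ∈ T.neighborSet v).symm
    exact ⟨u, huv, by have := hT.connected.two_le_deg_of_adj_of_deg_eq_one h3 huv hv; omega⟩
  have hdom (v : V) : v ∈ {v | deg T v ≠ 1} ∨ ∃ u ∈ {v | deg T v ≠ 1}, G.Adj u v := by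
    by_cases hv : deg T v = 1
    · obtain ⟨u, huv, hu⟩ := hnbr v hv
      exact Or.inr ⟨u, hu, hle huv⟩
    · exact Or.inl hv
  refine ⟨Connected.mono (G := T.induce _) (fun _ _ h => hle h) ?_, hdom⟩
  have hne : Nonempty V := Fintype.card_pos_iff.mp (by omega)
  obtain ⟨u, hu⟩ : ∃ u, deg T u ≠ 1 := by
    obtain ⟨v⟩ := hne
    rcases hdom v with hv | ⟨u, hu, -⟩
    exacts [⟨v, hv⟩, ⟨u, hu⟩]
  refine induce_connected_of_patches u hu fun {v} hv => ?_
  let p := (hT.connected u v).some.toPath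
  refine ⟨{x | x ∈ p.1.support}, fun x hx => ?_, p.1.start_mem_support, p.1.end_mem_support,
    (p.1.connected_induce_support).preconnected _ _⟩
  by_cases hxu : x = u
  · exact hxu ▸ hu
  by_cases hxv : x = v
  · exact hxv ▸ hv
  have := p.2.two_le_deg_of_mem_support hx hxu hxv
  exact fun h => by omega

def pendantExtension (G : SimpleGraph V) (S : Set V) (f : V → V) : SimpleGraph V :=
  G ⊓ fromRel fun a b => a ∈ S ∧ b ∈ S ∨ a ∉ S ∧ b = f a

section pendantExtension

variable {S : Set V} {f : V → V}

lemma pendantExtension_le : G.pendantExtension S f ≤ G := inf_le_left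

lemma neighborSet_pendantExtension_subset (hf : ∀ v ∉ S, f v ∈ S) {v : V} (hv : v ∉ S) :
    (G.pendantExtension S f).neighborSet v ⊆ {f v} := by
  rintro w ⟨-, -, (⟨hvS, -⟩ | ⟨-, rfl⟩) | (⟨-, hvS⟩ | ⟨hw, rfl⟩)⟩
  · exact absurd hvS hv
  · rfl
  · exact absurd hvS hv
  · exact absurd (hf w hw) hv

lemma connected_pendantExtension (hS : (G.induce S).Connected)
    (hf : ∀ v ∉ S, f v ∈ S ∧ G.Adj v (f v)) : (G.pendantExtension S f).Connected := by
  let ι : G.induce S →g G.pendantExtension S f :=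
    ⟨Subtype.val, fun {a b} h => ⟨h, fromRel_adj _ _ _ |>.mpr
      ⟨h.ne ∘ Subtype.ext, Or.inl (Or.inl ⟨a.2, b.2⟩)⟩⟩⟩
  have hreach (a : V) : ∃ s : S, (G.pendantExtension S f).Reachable a s := by
    by_cases ha : a ∈ S
    · exact ⟨⟨a, ha⟩, .rfl⟩
    · refine ⟨⟨f a, (hf a ha).1⟩, Adj.reachable ⟨(hf a ha).2, ?_⟩⟩
      exact (fromRel_adj _ _ _).mpr
        ⟨fun h => ha (h ▸ (hf a ha).1), Or.inl (Or.inr ⟨ha, rfl⟩)⟩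
  have : Nonempty V := ⟨(hS.nonempty.some : V)⟩
  refine (connected_iff _).mpr ⟨fun a b => ?_, ‹_›⟩
  obtain ⟨s, hs⟩ := hreach a
  obtain ⟨t, ht⟩ := hreach b
  exact hs.trans (((hS s t).map ι).trans ht.symm)

end pendantExtension

lemma IsConnDomSet.exists_isSpanningTree_ncard_compl_le_leafCount [Finite V] {S : Set V}
    (hS : IsConnDomSet G S) : ∃ T, IsSpanningTree G T ∧ Sᶜ.ncard ≤ leafCount T := by
  obtain ⟨hconn, hdom⟩ := hS
  have hf : ∀ v, ∃ u, v ∉ S → u ∈ S ∧ G.Adj v u := fun v => by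
    rcases hdom v with hv | ⟨u, hu, huv⟩
    exacts [⟨v, absurd hv⟩, ⟨u, fun _ => ⟨hu, huv.symm⟩⟩]
  choose f hf using hf
  obtain ⟨T, hTH, hT⟩ := (connected_pendantExtension hconn hf).exists_isTree_le
  refine ⟨T, ⟨hTH.trans pendantExtension_le, hT⟩, Set.ncard_le_ncard fun v hv => ?_⟩
  have : Nontrivial V := ⟨⟨v, f v, fun h => hv (h ▸ (hf v hv).1)⟩⟩
  have hle : deg T v ≤ 1 := (deg_mono hTH v).trans <| (Set.ncard_le_ncard
    (neighborSet_pendantExtension_subset (fun w hw => (hf w hw).1) hv)).trans_eq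
    (Set.ncard_singleton _)
  exact le_antisymm hle (hT.connected.one_le_deg v)

lemma IsTree.leafCount_eq [Fintype V] [Nontrivial V] (hT : T.IsTree)
    (hmax : ∀ v, deg T v ≤ 3) : leafCount T = {v | deg T v = 3}.ncard + 2 := by
  classical
  have hsum : ∑ v, deg T v + 2 = 2 * Fintype.card V := by
    simp_rw [deg_eq_degree]
    rw [sum_degrees_eq_twice_card_edges, ← hT.card_edgeFinset]
    ring
  have hpt (v : V) :
      deg T v + (if deg T v = 1 then 1 else 0) = 2 + (if deg T v = 3 then 1 else 0) := by
    have := hT.connected.one_le_deg v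
    have := hmax v
    split_ifs <;> omega
  have hbal := Finset.sum_congr (s₁ := Finset.univ) rfl fun v _ => hpt v
  rw [Finset.sum_add_distrib, Finset.sum_add_distrib, Finset.sum_boole, Finset.sum_boole,
    Finset.sum_const, Finset.card_univ, smul_eq_mul] at hbal
  rw [leafCount, Set.ncard_setOf_eq_card_filter, Set.ncard_setOf_eq_card_filter]
  push_cast at hbal
  omega

lemma IsSpanningTree.leafCount_eq_fullDegCount_add_two [Fintype V] [Nontrivial V]
    (hT : IsSpanningTree G T) (hreg : ∀ v, deg G v = 3) :
    leafCount T = fullDegCount G T + 2 := by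
  simp only [fullDegCount, hreg]
  exact hT.2.leafCount_eq fun v => hreg v ▸ deg_mono hT.1 v

lemma bddAbove_fullDegCount [Finite V] :
    BddAbove {k | ∃ T, IsSpanningTree G T ∧ fullDegCount G T = k} :=
  ⟨Nat.card V, by rintro _ ⟨T, -, rfl⟩; exact Set.ncard_le_card _⟩

lemma IsSpanningTree.fullDegCount_le_phi [Finite V] (hT : IsSpanningTree G T) :
    fullDegCount G T ≤ phi G :=
  le_csSup bddAbove_fullDegCount ⟨T, hT, rfl⟩

lemma Connected.exists_isSpanningTree_fullDegCount_eq_phi [Finite V] (hG : G.Connected) :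
    ∃ T, IsSpanningTree G T ∧ fullDegCount G T = phi G := by
  obtain ⟨T, hT⟩ := hG.exists_isTree_le
  exact Nat.sSup_mem (s := {k | ∃ T, IsSpanningTree G T ∧ fullDegCount G T = k})
    ⟨_, T, hT, rfl⟩ bddAbove_fullDegCount

end SimpleGraph

theorem stmt19 {V : Type*} [Fintype V] (G : SimpleGraph V) (n : ℕ)
    (hn : n = Fintype.card V) (hn4 : 4 ≤ n) (hG : G.Connected)
    (hreg : ∀ v : V, deg G v = 3) :
    gammaC G = n - 2 - phi G := by
  subst hn
  have : Nontrivial V := Fintype.one_lt_card_iff_nontrivial.mp (by omega)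
  obtain ⟨T, hT, hTφ⟩ := hG.exists_isSpanningTree_fullDegCount_eq_phi
  have hTdom := hT.isConnDomSet_nonLeaves (by omega)
  have hγT : gammaC G ≤ {v | deg T v ≠ 1}.ncard := Nat.sInf_le ⟨_, hTdom, rfl⟩
  obtain ⟨S, hS, hSγ⟩ : ∃ S, IsConnDomSet G S ∧ S.ncard = gammaC G :=
    Nat.sInf_mem (s := {k | ∃ S, IsConnDomSet G S ∧ S.ncard = k}) ⟨_, _, hTdom, rfl⟩
  obtain ⟨T', hT', hST'⟩ := hS.exists_isSpanningTree_ncard_compl_le_leafCount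
  have hT'φ := hT'.fullDegCount_le_phi
  have hTleaf := hT.leafCount_eq_fullDegCount_add_two hreg
  have hT'leaf := hT'.leafCount_eq_fullDegCount_add_two hreg
  have hScard : S.ncard + Sᶜ.ncard = Fintype.card V := by
    rw [← Nat.card_eq_fintype_card]; exact Set.ncard_add_ncard_compl S
  have hTcard : leafCount T + {v | deg T v ≠ 1}.ncard = Fintype.card V := by
    rw [← Nat.card_eq_fintype_card]; exact Set.ncard_add_ncard_compl _
  omega
end
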